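/- Let (m_τ)_{τ≥1} be independent unbiased estimators of m_true with common variance v, and let λ(t) = 1 - t^{-p} with 0 < p < 1. Define m_t = (1-λ(t)) Σ_{τ=1}^t λ(t)^{t-τ} m_τ. Then E[m_t] → m_true and Var(m_t) → 0 as t → ∞. -/

import Mathlib

/-!
Writing `λ = λ(t)`, the average is `∑ τ, w_τ m_τ` with weights `w_τ = (1 - λ) λ^(t - τ)`.
These sum to `1 - λ^t`, so the mean is `m_true (1 - λ^t)`; by independence the variance is
`v ∑ w_τ² ≤ v (1 - λ) = v t^(-p) → 0`. Finally `λ^t = (1 - t^(-p))^t ≤ exp (-t^(1-p))`, which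
tends to `0` precisely because `p < 1`.
-/

open MeasureTheory ProbabilityTheory Filter Finset

theorem Finset.sum_Icc_one_sub_eq_sum_range {M : Type*} [AddCommMonoid M] (f : ℕ → M) (t : ℕ) :
    ∑ τ ∈ Icc 1 t, f (t - τ) = ∑ j ∈ range t, f j :=
  sum_nbij' (t - ·) (t - ·) (by intro; simp; omega) (by intro; simp; omega)
    (by intro; simp; omega) (by intro; simp; omega) fun _ _ => rfl

section WeightedSum

variable {Ω ι : Type*} [MeasurableSpace Ω] {μ : Measure Ω} {X : ι → Ω → ℝ}

theorem integral_sum_const_mul_of_integral_eq {a : ℝ} (hX : ∀ i, Integrable (X i) μ)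
    (hmean : ∀ i, ∫ ω, X i ω ∂μ = a) (s : Finset ι) (c : ι → ℝ) :
    ∫ ω, ∑ i ∈ s, c i * X i ω ∂μ = a * ∑ i ∈ s, c i := by
  rw [integral_finsetSum s fun i _ => (hX i).const_mul (c i), mul_sum]
  simp_rw [integral_const_mul, hmean, mul_comm a]

theorem variance_sum_const_mul_of_iIndepFun {v : ℝ} (hind : iIndepFun X μ)
    (hL2 : ∀ i, MemLp (X i) 2 μ) (hvar : ∀ i, variance (X i) μ = v) (s : Finset ι) (c : ι → ℝ) :
    variance (fun ω => ∑ i ∈ s, c i * X i ω) μ = v * ∑ i ∈ s, c i ^ 2 := by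
  have hind' : iIndepFun (fun i ω => c i * X i ω) μ :=
    hind.comp (fun i x => c i * x) fun i => measurable_const_mul (c i)
  have hsum : (fun ω => ∑ i ∈ s, c i * X i ω) = ∑ i ∈ s, fun ω => c i * X i ω := by
    ext ω; simp
  rw [hsum, IndepFun.variance_sum (fun i _ => (hL2 i).const_mul (c i))
    fun i _ j _ hij => hind'.indepFun hij, mul_sum]
  simp_rw [variance_const_mul, hvar, mul_comm v]

end WeightedSum

def emaWeight (l : ℝ) (t τ : ℕ) : ℝ := (1 - l) * l ^ (t - τ)

theorem sum_emaWeight (l : ℝ) (t : ℕ) : ∑ τ ∈ Icc 1 t, emaWeight l t τ = 1 - l ^ t := by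
  simp_rw [emaWeight, ← mul_sum, sum_Icc_one_sub_eq_sum_range (l ^ ·), mul_neg_geom_sum]

theorem sum_emaWeight_sq_le {l : ℝ} (hl0 : 0 ≤ l) (hl1 : l ≤ 1) (t : ℕ) :
    ∑ τ ∈ Icc 1 t, emaWeight l t τ ^ 2 ≤ 1 - l := by
  simp_rw [emaWeight, mul_pow, ← mul_sum, ← pow_mul, mul_comm _ 2, pow_mul,
    sum_Icc_one_sub_eq_sum_range ((l ^ 2) ^ ·)]
  set S := ∑ j ∈ range t, (l ^ 2) ^ j
  have hS : 0 ≤ S := sum_nonneg fun j _ => by positivity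
  have hgeom : (1 - l ^ 2) * S = 1 - (l ^ 2) ^ t := mul_neg_geom_sum _ _
  -- `(1 - l) * S ≤ (1 - l ^ 2) * S = 1 - l ^ (2 * t) ≤ 1`
  nlinarith [mul_nonneg (mul_nonneg (sub_nonneg.2 hl1) hS) hl0, pow_nonneg (sq_nonneg l) t]

theorem one_sub_rpow_neg_mem_Icc {p t : ℝ} (hp : 0 ≤ p) (ht : 1 ≤ t) :
    1 - t ^ (-p) ∈ Set.Icc 0 1 := by
  constructor
  · linarith [Real.rpow_le_one_of_one_le_of_nonpos ht (neg_nonpos.2 hp)]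
  · linarith [Real.rpow_nonneg (zero_le_one.trans ht) (-p)]

theorem tendsto_one_sub_rpow_neg_pow_self {p : ℝ} (hp0 : 0 ≤ p) (hp1 : p < 1) :
    Tendsto (fun t : ℕ => (1 - (t : ℝ) ^ (-p)) ^ t) atTop (nhds 0) := by
  have hexp : Tendsto (fun t : ℕ => Real.exp (-((t : ℝ) ^ (1 - p)))) atTop (nhds 0) :=
    Real.tendsto_exp_neg_atTop_nhds_zero.comp <|
      (tendsto_rpow_atTop (by linarith)).comp tendsto_natCast_atTop_atTop
  have hone : ∀ᶠ t : ℕ in atTop, (1 : ℝ) ≤ t :=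
    (eventually_ge_atTop 1).mono fun t ht => by exact_mod_cast ht
  refine tendsto_of_tendsto_of_tendsto_of_le_of_le' tendsto_const_nhds hexp ?_ ?_
  · filter_upwards [hone] with t ht
    exact pow_nonneg (one_sub_rpow_neg_mem_Icc hp0 ht).1 t
  · filter_upwards [hone] with t ht
    have hdiv : (t : ℝ) ^ (1 - p) / t = (t : ℝ) ^ (-p) := by
      rw [Real.rpow_sub (by linarith), Real.rpow_one, Real.rpow_neg (by linarith)]
      field_simp
    rw [← hdiv]
    exact Real.one_sub_div_pow_le_exp_neg (Real.rpow_le_self_of_one_le ht (by linarith))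

theorem ema_increasing_lambda_consistent_general
    {Ω : Type*} [MeasurableSpace Ω] (μ : Measure Ω) [IsProbabilityMeasure μ]
    (m : ℕ → Ω → ℝ) (m_true v p : ℝ)
    (hp0 : 0 < p) (hp1 : p < 1)
    (h_indep : iIndepFun m μ)
    (h_L2 : ∀ τ, MemLp (m τ) 2 μ)
    (h_unbiased : ∀ τ, ∫ ω, m τ ω ∂μ = m_true)
    (h_var : ∀ τ, variance (m τ) μ = v)
    (lam : ℕ → ℝ) (hlam : ∀ t : ℕ, lam t = 1 - (t : ℝ) ^ (-p))
    (M : ℕ → Ω → ℝ)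
    (hM : ∀ t ω, M t ω = (1 - lam t) * ∑ τ ∈ Finset.Icc 1 t, lam t ^ (t - τ) * m τ ω) :
    Tendsto (fun t => ∫ ω, M t ω ∂μ) atTop (nhds m_true) ∧
      Tendsto (fun t => variance (M t) μ) atTop (nhds 0) := by
  have hM_weighted : ∀ t, M t = fun ω => ∑ τ ∈ Icc 1 t, emaWeight (lam t) t τ * m τ ω := by
    intro t; ext ω; simp_rw [hM, emaWeight, mul_sum, mul_assoc]
  constructor
  · simp_rw [hM_weighted, integral_sum_const_mul_of_integral_eq
      (fun τ => (h_L2 τ).integrable one_le_two) h_unbiased, sum_emaWeight, hlam]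
    simpa using (tendsto_const_nhds (x := m_true)).mul
      ((tendsto_const_nhds (x := (1 : ℝ))).sub (tendsto_one_sub_rpow_neg_pow_self hp0.le hp1))
  · have hbound : Tendsto (fun t : ℕ => v * (t : ℝ) ^ (-p)) atTop (nhds 0) := by
      simpa using tendsto_const_nhds.mul
        ((tendsto_rpow_neg_atTop hp0).comp tendsto_natCast_atTop_atTop)
    refine tendsto_of_tendsto_of_tendsto_of_le_of_le' tendsto_const_nhds hbound
      (Eventually.of_forall fun t => variance_nonneg _ _) ?_
    filter_upwards [eventually_ge_atTop 1] with t ht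
    have hlam_mem := hlam t ▸ one_sub_rpow_neg_mem_Icc hp0.le (Nat.one_le_cast.2 ht)
    have hv : 0 ≤ v := h_var 0 ▸ variance_nonneg (m 0) μ
    calc variance (M t) μ = v * ∑ τ ∈ Icc 1 t, emaWeight (lam t) t τ ^ 2 := by
          rw [hM_weighted, variance_sum_const_mul_of_iIndepFun h_indep h_L2 h_var]
      _ ≤ v * (1 - lam t) :=
          mul_le_mul_of_nonneg_left (sum_emaWeight_sq_le hlam_mem.1 hlam_mem.2 t) hv
      _ = v * (t : ℝ) ^ (-p) := by rw [hlam, sub_sub_cancel]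

/-- With `λ(t) = 1 - t^(-p)`, `0 < p < 1`, the exponentially weighted
average of independent unbiased estimators has expectation tending to `m_true` and
variance tending to `0` as `t → ∞`. -/
theorem ema_increasing_lambda_consistent
    {Ω : Type*} [MeasurableSpace Ω] (μ : Measure Ω) [IsProbabilityMeasure μ]
    (m : ℕ → Ω → ℝ) (m_true v p : ℝ)
    (hp0 : 0 < p) (hp1 : p < 1)
    (h_indep : iIndepFun m μ)
    (h_meas : ∀ τ, Measurable (m τ))
    (h_L2 : ∀ τ, MemLp (m τ) 2 μ)
    (h_unbiased : ∀ τ, ∫ ω, m τ ω ∂μ = m_true)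
    (h_var : ∀ τ, variance (m τ) μ = v)
    (lam : ℕ → ℝ) (hlam : ∀ t : ℕ, lam t = 1 - (t : ℝ) ^ (-p))
    (M : ℕ → Ω → ℝ)
    (hM : ∀ t ω, M t ω = (1 - lam t) * ∑ τ ∈ Finset.Icc 1 t, lam t ^ (t - τ) * m τ ω) :
    Tendsto (fun t => ∫ ω, M t ω ∂μ) atTop (nhds m_true) ∧
      Tendsto (fun t => variance (M t) μ) atTop (nhds 0) :=
  ema_increasing_lambda_consistent_general μ m m_true v p hp0 hp1 h_indep h_L2 h_unbiased h_var lam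
    hlam M hM
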